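/- Propositional equivalence of LTLf formulas is preserved by formula progression: if φ and ψ are LTLf formulas in NNF over P with φ ∼p ψ (their propositionalizations are equivalent as Boolean functions over the combined set of temporal atoms), then for every σ ∈ 2^P, fp(φ, σ) ∼p fp(ψ, σ). -/
import Mathlib


namespace LTLfSynth

open scoped Classical

/-- LTLf formulas in negation normal form. -/
inductive LTLf (P : Type*) where
  | tt : LTLf P
  | ff : LTLf P
  | atom : P → LTLf P
  | natom : P → LTLf P
  | and : LTLf P → LTLf P → LTLf P
  | or : LTLf P → LTLf P → LTLf P
  | next : LTLf P → LTLf P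
  | wnext : LTLf P → LTLf P
  | until_ : LTLf P → LTLf P → LTLf P
  | release : LTLf P → LTLf P → LTLf P

variable {P : Type*}

/-- ◇true -/
def diamondTrue : LTLf P := .until_ .tt .tt

/-- □false -/
def boxFalse : LTLf P := .release .ff .ff

/-- Finite-trace satisfaction `ρ, i ⊨ φ`, where position `ρ.length` (and beyond)
corresponds to the empty suffix (empty-trace semantics). -/
def Sat (ρ : List (Set P)) : LTLf P → ℕ → Prop
  | .tt, _ => True
  | .ff, _ => False
  | .atom p, i => i < ρ.length ∧ p ∈ ρ.getD i ∅
  | .natom p, i => i < ρ.length ∧ p ∉ ρ.getD i ∅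
  | .and φ ψ, i => Sat ρ φ i ∧ Sat ρ ψ i
  | .or φ ψ, i => Sat ρ φ i ∨ Sat ρ ψ i
  | .next φ, i => i + 1 < ρ.length ∧ Sat ρ φ (i + 1)
  | .wnext φ, i => i + 1 < ρ.length → Sat ρ φ (i + 1)
  | .until_ φ ψ, i =>
      ∃ j, i ≤ j ∧ j < ρ.length ∧ Sat ρ ψ j ∧ ∀ k, i ≤ k → k < j → Sat ρ φ k
  | .release φ ψ, i =>
      ∀ j, i ≤ j → j < ρ.length → (Sat ρ ψ j ∨ ∃ k, i ≤ k ∧ k < j ∧ Sat ρ φ k)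

/-- Single-step formula progression `fp σ φ = fp(φ, σ)`. -/
noncomputable def fp (σ : Set P) : LTLf P → LTLf P
  | .tt => .tt
  | .ff => .ff
  | .atom p => if p ∈ σ then .tt else .ff
  | .natom p => if p ∈ σ then .ff else .tt
  | .and φ ψ => .and (fp σ φ) (fp σ ψ)
  | .or φ ψ => .or (fp σ φ) (fp σ ψ)
  | .next φ => .and φ diamondTrue
  | .wnext φ => .or φ boxFalse
  | .until_ .tt .tt => .tt
  | .until_ φ ψ => .or (fp σ ψ) (.and (fp σ φ) (.and (.until_ φ ψ) diamondTrue))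
  | .release .ff .ff => .ff
  | .release φ ψ => .and (fp σ ψ) (.or (fp σ φ) (.or (.release φ ψ) boxFalse))

/-- Propositional evaluation of a formula, treating its propositional atoms
(literals and temporal subformulas) as opaque propositional variables valued by `v`. -/
def PropEval (v : LTLf P → Prop) : LTLf P → Prop
  | .tt => True
  | .ff => False
  | .and φ ψ => PropEval v φ ∧ PropEval v ψ
  | .or φ ψ => PropEval v φ ∨ PropEval v ψ
  | φ => v φ

/-- Propositional equivalence `φ ∼p ψ`. -/
def PropEquiv (φ ψ : LTLf P) : Prop :=
  ∀ v : LTLf P → Prop, PropEval v φ ↔ PropEval v ψ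

lemma propEval_fp (σ : Set P) (v : LTLf P → Prop) (φ : LTLf P) :
    PropEval v (fp σ φ) ↔ PropEval (fun a => PropEval v (fp σ a)) φ := by
  induction φ with
  | tt => simp [fp, PropEval]
  | ff => simp [fp, PropEval]
  | atom p => simp [PropEval]
  | natom p => simp [PropEval]
  | and φ ψ ih1 ih2 => simp [fp, PropEval, ih1, ih2]
  | or φ ψ ih1 ih2 => simp [fp, PropEval, ih1, ih2]
  | next φ _ => simp [PropEval]
  | wnext φ _ => simp [PropEval]
  | until_ φ ψ _ _ => simp [PropEval]
  | release φ ψ _ _ => simp [PropEval]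

/-- propositional equivalence is preserved by progression. -/
theorem fp_preserves_propEquiv (φ ψ : LTLf P) (h : PropEquiv φ ψ) (σ : Set P) :
    PropEquiv (fp σ φ) (fp σ ψ) := by
  intro v
  rw [propEval_fp σ v φ, propEval_fp σ v ψ]
  exact h _

end LTLfSynth
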